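/- Let v_c, v > 0, k = v_c/v, θ_m = Arcsin(1/√(3 + k²)), and define F⁺(θ) = θ + Arcsin(k·sin θ/√(1 - 3 sin²θ)) on (-θ_m, θ_m). Then F⁺ is strictly monotone increasing on (-θ_m, θ_m). -/

import Mathlib

/-!
On `(-θₘ, θₘ)` the sine is increasing and satisfies `sin² θ < 1 / (3 + k²) ≤ 1 / 3`, and
`s ↦ s / √(1 - 3 s²)` is increasing wherever `3 s² < 1`. Since `k > 0` and `arcsin` is monotone,
the second summand of `F⁺` is monotone, and adding the strictly increasing `θ` makes `F⁺`
strictly increasing.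
-/

open Real Set

lemma abs_sin_lt_of_mem_Ioo_arcsin {a θ : ℝ} (hθ : θ ∈ Ioo (-arcsin a) (arcsin a)) :
    |sin θ| < a := by
  have hlo : -(π / 2) < θ := (neg_le_neg (arcsin_le_pi_div_two a)).trans_lt hθ.1
  have hhi : θ < π / 2 := hθ.2.trans_le (arcsin_le_pi_div_two a)
  rw [abs_lt]
  constructor
  · rw [neg_lt, ← sin_neg, ← lt_arcsin_iff_sin_lt' ⟨by linarith, by linarith⟩]
    linarith [hθ.1]
  · exact (lt_arcsin_iff_sin_lt' ⟨hlo.le, hhi⟩).1 hθ.2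

lemma monotoneOn_div_sqrt_one_sub_mul_sq {c : ℝ} (hc : 0 ≤ c) :
    MonotoneOn (fun s : ℝ => s / √(1 - c * s ^ 2)) {s | c * s ^ 2 < 1} := by
  intro s hs t ht hst
  simp only [mem_ofPred_eq] at hs ht
  rw [div_le_div_iff₀ (sqrt_pos.2 (by linarith)) (sqrt_pos.2 (by linarith))]
  rcases le_total 0 s with hs0 | hs0
  · have hsq : c * s ^ 2 ≤ c * t ^ 2 := by gcongr
    calc s * √(1 - c * t ^ 2) ≤ t * √(1 - c * t ^ 2) := by gcongr
      _ ≤ t * √(1 - c * s ^ 2) := by gcongr; linarith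
  rcases le_total t 0 with ht0 | ht0
  · have hsq : c * t ^ 2 ≤ c * s ^ 2 := mul_le_mul_of_nonneg_left (by nlinarith) hc
    calc s * √(1 - c * t ^ 2) ≤ s * √(1 - c * s ^ 2) :=
          mul_le_mul_of_nonpos_left (sqrt_le_sqrt (by linarith)) hs0
      _ ≤ t * √(1 - c * s ^ 2) := mul_le_mul_of_nonneg_right hst (sqrt_nonneg _)
  · calc s * √(1 - c * t ^ 2) ≤ 0 := mul_nonpos_of_nonpos_of_nonneg hs0 (sqrt_nonneg _)
      _ ≤ t * √(1 - c * s ^ 2) := mul_nonneg ht0 (sqrt_nonneg _)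

/-- Monotonicity of F⁺(θ) = θ + arcsin(k sinθ/√(1-3sin²θ)) on (-θ_m, θ_m). -/
theorem stmt_10 (vc v : ℝ) (hvc : 0 < vc) (hv : 0 < v)
    (k : ℝ) (hk : k = vc / v)
    (θm : ℝ) (hθm : θm = Real.arcsin (1 / Real.sqrt (3 + k ^ 2))) :
    StrictMonoOn
      (fun θ : ℝ => θ + Real.arcsin (k * Real.sin θ / Real.sqrt (1 - 3 * Real.sin θ ^ 2)))
      (Set.Ioo (-θm) θm) := by
  have hk0 : 0 ≤ k := hk ▸ (div_pos hvc hv).le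
  have hsin_mono : MonotoneOn sin (Ioo (-θm) θm) :=
    strictMonoOn_sin.monotoneOn.mono fun θ hθ =>
      ⟨(neg_le_neg (hθm ▸ arcsin_le_pi_div_two _)).trans hθ.1.le,
        hθ.2.le.trans (hθm ▸ arcsin_le_pi_div_two _)⟩
  have hsin_sq : MapsTo sin (Ioo (-θm) θm) {s | 3 * s ^ 2 < 1} := fun θ hθ => by
    have habs := abs_sin_lt_of_mem_Ioo_arcsin (hθm ▸ hθ)
    have hprod : (|sin θ| * √(3 + k ^ 2)) ^ 2 < 1 :=
      pow_lt_one₀ (by positivity) ((lt_div_iff₀ (by positivity)).1 habs) two_ne_zero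
    rw [mul_pow, sq_abs, sq_sqrt (by positivity)] at hprod
    show 3 * sin θ ^ 2 < 1
    nlinarith [sq_nonneg (sin θ * k)]
  have harcsin_mono : MonotoneOn
      (fun θ => arcsin (k * sin θ / √(1 - 3 * sin θ ^ 2))) (Ioo (-θm) θm) := by
    have hquot := (monotoneOn_div_sqrt_one_sub_mul_sq (by norm_num)).comp hsin_mono hsin_sq
    simp_rw [mul_div_assoc]
    exact monotone_arcsin.comp_monotoneOn fun a ha b hb hab =>
      mul_le_mul_of_nonneg_left (hquot ha hb hab) hk0
  exact (strictMono_id.strictMonoOn _).add_monotone harcsin_mono
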